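/- Let q ≥ 2 be an integer and work with Λ(r) for P = q (i.e., 𝔭 = T, level 𝔫 = T^r). Let r ≥ 3. Letting e_0, …, e_r denote the standard basis of ℚ^{r+1}, one has Λ(r)·( −q·e_{r−2} + (q²+q)·e_{r−1} − q²·e_r ) = q^{r−1}(q²−1)(q−1)·( e_{r−1} − e_r ). (In the paper: the exponent vector r_d of g(C_{r−1}) for the divisor C_{r−1} = (P_{T^{r−1}}) − deg(P_{T^{r−1}})·[∞] on X₀(T^r).) -/

import Mathlib

/-- The transpose of the matrix `Λ(r)`: for `0 ≤ i, j ≤ r`, the `(i,j)`-entry of `Λ(r)ᵀ`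
is `P^(r-i)` if `j = 0`, `P^i` if `j = r`, and `P^(r - min(j, r-j) - |i-j|) * (q-1)`
for `1 ≤ j ≤ r-1`, where `P = q^e`. -/
def lambdaT (q e r : ℕ) : Matrix (Fin (r + 1)) (Fin (r + 1)) ℚ := fun i j =>
  if (j : ℕ) = 0 then ((q : ℚ) ^ e) ^ (r - (i : ℕ))
  else if (j : ℕ) = r then ((q : ℚ) ^ e) ^ (i : ℕ)
  else ((q : ℚ) ^ e) ^ (r - (min (j : ℕ) (r - (j : ℕ)) + Nat.dist (i : ℕ) (j : ℕ))) *
    ((q : ℚ) - 1)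

/-- The matrix `Λ(r)`. -/
def lambdaMat (q e r : ℕ) : Matrix (Fin (r + 1)) (Fin (r + 1)) ℚ :=
  Matrix.transpose (lambdaT q e r)

/-- The standard basis vector `e_i` of `ℚ^{r+1}` scaled by `c`. -/
def basisVec (r : ℕ) (i : Fin (r + 1)) (c : ℚ) : Fin (r + 1) → ℚ := Pi.single i c

/-- For `𝔭 = T` (so `P = q`, `e = 1`) and `r ≥ 3`:
`Λ(r)·(−q e_{r−2} + (q²+q) e_{r−1} − q² e_r) = q^{r−1}(q²−1)(q−1)·(e_{r−1} − e_r)`: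
the exponent vector of `g(C_{r−1})` on `X₀(T^r)`. -/
theorem g_of_C_r_sub_one (q : ℕ) (hq : 2 ≤ q) (r : ℕ) (hr : 3 ≤ r) :
    (lambdaMat q 1 r).mulVec
        (basisVec r ⟨r - 2, by omega⟩ (-(q : ℚ)) +
          basisVec r ⟨r - 1, by omega⟩ ((q : ℚ) ^ 2 + (q : ℚ)) +
          basisVec r ⟨r, by omega⟩ (-(q : ℚ) ^ 2)) =
      ((q : ℚ) ^ (r - 1) * ((q : ℚ) ^ 2 - 1) * ((q : ℚ) - 1)) •
        (basisVec r ⟨r - 1, by omega⟩ 1 - basisVec r ⟨r, by omega⟩ 1) := by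
  obtain ⟨s, rfl⟩ : ∃ s, r = s + 3 := ⟨r - 3, by omega⟩
  funext i
  rcases i with ⟨n, hn⟩
  simp only [basisVec, Matrix.mulVec_add, Matrix.mulVec_single, Matrix.col_apply, op_smul_eq_mul, lambdaMat,
    Matrix.transpose_apply, lambdaT, Pi.add_apply, Pi.smul_apply, Pi.sub_apply,
    smul_eq_mul, pow_one, Pi.single_apply, Fin.mk.injEq, Fin.ext_iff,
    show s + 3 - 2 = s + 1 from by omega, show s + 3 - 1 = s + 2 from by omega]
  rcases eq_or_ne n 0 with rfl | h0
  · simp only [if_pos rfl, if_neg (show ¬(0 : ℕ) = s + 2 from by omega),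
      if_neg (show ¬(0 : ℕ) = s + 3 from by omega),
      show s + 3 - (s + 1) = 2 from by omega, show s + 3 - (s + 2) = 1 from by omega,
      Nat.sub_self, if_true]
    ring
  rcases eq_or_ne n (s + 3) with rfl | h3
  · simp only [if_neg h0, if_pos rfl, if_neg (show ¬s + 3 = s + 2 from by omega), if_true]
    ring
  simp only [if_neg h0, if_neg h3]
  rcases eq_or_ne n (s + 2) with rfl | h2
  · rw [show s + 3 - ((s + 2) ⊓ (s + 3 - (s + 2)) + Nat.dist (s + 1) (s + 2)) = s + 1 from by
        simp only [Nat.dist]; omega,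
      show s + 3 - ((s + 2) ⊓ (s + 3 - (s + 2)) + Nat.dist (s + 2) (s + 2)) = s + 2 from by
        simp only [Nat.dist]; omega,
      show s + 3 - ((s + 2) ⊓ (s + 3 - (s + 2)) + Nat.dist (s + 3) (s + 2)) = s + 1 from by
        simp only [Nat.dist]; omega]
    norm_num
    ring
  · have hle : n ≤ s + 1 := by omega
    rw [show s + 3 - (n ⊓ (s + 3 - n) + Nat.dist (s + 1) n) = (n - n ⊓ (s + 3 - n)) + 2 from by
        simp only [Nat.dist]; omega,
      show s + 3 - (n ⊓ (s + 3 - n) + Nat.dist (s + 2) n) = (n - n ⊓ (s + 3 - n)) + 1 from by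
        simp only [Nat.dist]; omega,
      show s + 3 - (n ⊓ (s + 3 - n) + Nat.dist (s + 3) n) = n - n ⊓ (s + 3 - n) from by
        simp only [Nat.dist]; omega]
    simp only [if_neg h2]
    ring
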